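/- Let ν ∈ ℕ₀, n ∈ L_ν, and let κ := |{i ∈ {1,...,ν} : c^{i-1}(n) is odd}|. Then n ≥ σ(n) · 2^ν/6^κ, as an inequality of rational (or real) numbers. -/

import Mathlib

/-- The Collatz function (on ℕ; positive integers are preserved). -/
def c (n : ℕ) : ℕ := if Even n then n / 2 else 3 * n + 1

/-- The level set `L ν`: positive integers whose Collatz orbit first reaches 1 after exactly ν steps. -/
def L (ν : ℕ) : Set ℕ := {n | 0 < n ∧ c^[ν] n = 1 ∧ ∀ i < ν, c^[i] n ≠ 1}

/-- The orbit set `R n = {c^i(n) : i ∈ ℕ₀}`. -/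
def R (n : ℕ) : Set ℕ := {k | ∃ i : ℕ, c^[i] n = k}

/-- The orbit steadiness `σ n = ∏_{k ∈ R(n), k ≡ 4 mod 6} (k-1)/k`, as a real number. -/
noncomputable def σ (n : ℕ) : ℝ := ∏ᶠ k ∈ {k ∈ R n | k % 6 = 4}, ((k : ℝ) - 1) / k

/-- The Collatz tree `𝔠`: positive integers whose orbit reaches 1. -/
def 𝔠 : Set ℕ := ⋃ ν : ℕ, L ν

/-- `σ₀` is the infimum of the orbit steadiness over the Collatz tree. -/
noncomputable def σ₀ : ℝ := sInf (σ '' 𝔠)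

/-- The slot `S ν κ = [σ₀ · 2^ν/6^κ, 2^ν/6^κ]` as a real interval. -/
noncomputable def S (ν κ : ℕ) : Set ℝ := Set.Icc (σ₀ * 2 ^ ν / 6 ^ κ) (2 ^ ν / 6 ^ κ)

/-!
Along the orbit `n = a₀, a₁, …, a_ν = 1` an even step gives `aᵢ = 2 aᵢ₊₁`, and an odd step gives
`aᵢ = (aᵢ₊₁ - 1)/3 = (1/3) · ((aᵢ₊₁ - 1)/aᵢ₊₁) · aᵢ₊₁`. Multiplying, `n = 2^ν/6^κ · ∏ (aᵢ₊₁ - 1)/aᵢ₊₁`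
over the odd steps `i`. The `aᵢ₊₁` occurring there are distinct orbit elements `≡ 4 (mod 6)`, and
every factor of `σ n` lies in `[0, 1]`, so this product is at least `σ n`.
-/

open Finset

noncomputable def steadiness (k : ℕ) : ℝ := ((k : ℝ) - 1) / k

lemma steadiness_nonneg (k : ℕ) : 0 ≤ steadiness k := by
  rcases k.eq_zero_or_pos with rfl | hk
  · simp [steadiness] -- `(-1) / 0 = 0`
  · exact div_nonneg (sub_nonneg.mpr (by exact_mod_cast hk)) k.cast_nonneg

lemma steadiness_le_one (k : ℕ) : steadiness k ≤ 1 :=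
  div_le_one_of_le₀ (by linarith) k.cast_nonneg

lemma c_mod_six_of_odd {k : ℕ} (hk : Odd k) : c k % 6 = 4 := by
  obtain ⟨m, rfl⟩ := hk
  rw [c, if_neg (Nat.not_even_iff_odd.mpr ⟨m, rfl⟩)]
  omega

lemma cast_eq_two_mul_c_of_even {k : ℕ} (hk : Even k) : (k : ℝ) = 2 * c k := by
  rw [c, if_pos hk, Nat.cast_div_charZero (even_iff_two_dvd.mp hk)]
  ring

lemma cast_eq_steadiness_c_mul_c_of_odd {k : ℕ} (hk : Odd k) :
    (k : ℝ) = steadiness (c k) / 3 * c k := by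
  simp only [c, if_neg (Nat.not_even_iff_odd.mpr hk), steadiness]
  have : (3 * k + 1 : ℝ) ≠ 0 := by positivity
  push_cast
  field_simp
  ring

def oddSteps (n ν : ℕ) : Finset ℕ := (range ν).filter fun i => Odd (c^[i] n)

lemma oddSteps_succ (n ν : ℕ) :
    oddSteps n (ν + 1) = if Odd (c^[ν] n) then insert ν (oddSteps n ν) else oddSteps n ν := by
  rw [oddSteps, range_add_one, filter_insert]
  rfl

lemma lt_of_mem_oddSteps {n ν i : ℕ} (hi : i ∈ oddSteps n ν) : i < ν :=
  mem_range.mp (mem_filter.mp hi).1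

lemma cast_eq_mul_iterate (n ν : ℕ) :
    (n : ℝ) = 2 ^ ν / 6 ^ #(oddSteps n ν) * (∏ i ∈ oddSteps n ν, steadiness (c^[i + 1] n)) *
      c^[ν] n := by
  induction ν with
  | zero => simp [oddSteps]
  | succ ν ih =>
    have hν : ν ∉ oddSteps n ν := fun h => (lt_of_mem_oddSteps h).false
    rw [oddSteps_succ, Function.iterate_succ_apply']
    split_ifs with h
    · rw [prod_insert hν, card_insert_of_notMem hν, ih, cast_eq_steadiness_c_mul_c_of_odd h,
        Function.iterate_succ_apply']
      ring
    · rw [ih, cast_eq_two_mul_c_of_even (Nat.not_odd_iff_even.mp h)]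
      ring

lemma iterate_c_one_mem (j : ℕ) : c^[j] 1 ∈ ({1, 2, 4} : Set ℕ) := by
  induction j with
  | zero => simp
  | succ j ih =>
    rw [Function.iterate_succ_apply']
    rcases ih with h | h | h <;> rw [h] <;> decide

lemma R_finite {n ν : ℕ} (h : c^[ν] n = 1) : (R n).Finite := by
  refine (((Set.finite_Iio ν).image fun i => c^[i] n).union (Set.toFinite {1, 2, 4})).subset ?_
  rintro _ ⟨i, rfl⟩
  rcases lt_or_ge i ν with hi | hi
  · exact Or.inl ⟨i, hi, rfl⟩
  · right
    rw [← Nat.sub_add_cancel hi, Function.iterate_add_apply, h]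
    exact iterate_c_one_mem _

lemma injOn_iterate_Iic {n ν : ℕ} (hn : n ∈ L ν) : Set.InjOn (fun i => c^[i] n) (Set.Iic ν) := by
  intro i (hi : i ≤ ν) j (hj : j ≤ ν) (hij : c^[i] n = c^[j] n)
  by_contra hne
  wlog hlt : i < j generalizing i j
  · exact this hj hi hij.symm (Ne.symm hne) (by omega)
  refine hn.2.2 (ν - (j - i)) (by omega) ?_
  have hν : c^[ν - j] (c^[j] n) = 1 := by
    rw [← Function.iterate_add_apply, Nat.sub_add_cancel hj, hn.2.1]
  rwa [← hij, ← Function.iterate_add_apply, show ν - j + i = ν - (j - i) by omega] at hν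

lemma σ_le_prod_oddSteps {n ν : ℕ} (hn : n ∈ L ν) :
    σ n ≤ ∏ i ∈ oddSteps n ν, steadiness (c^[i + 1] n) := by
  have hfin : {k ∈ R n | k % 6 = 4}.Finite := (R_finite hn.2.1).subset fun _ hk => hk.1
  have hsub : (oddSteps n ν).image (fun i => c^[i + 1] n) ⊆ hfin.toFinset := by
    intro k hk
    obtain ⟨i, hi, rfl⟩ := mem_image.mp hk
    refine hfin.mem_toFinset.mpr ⟨⟨i + 1, rfl⟩, ?_⟩
    rw [Function.iterate_succ_apply']
    exact c_mod_six_of_odd (mem_filter.mp hi).2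
  have hinj : Set.InjOn (fun i => c^[i + 1] n) (oddSteps n ν) :=
    (injOn_iterate_Iic hn).comp Nat.succ_injective.injOn
      fun i hi => Set.mem_Iic.mpr (lt_of_mem_oddSteps hi)
  calc σ n = ∏ k ∈ hfin.toFinset, steadiness k := finprod_mem_eq_finite_toFinset_prod _ hfin
    _ ≤ ∏ k ∈ (oddSteps n ν).image (fun i => c^[i + 1] n), steadiness k :=
      prod_le_prod_of_subset_of_le_one hsub (fun k _ => steadiness_nonneg k)
        (fun k _ _ => steadiness_le_one k)
    _ = ∏ i ∈ oddSteps n ν, steadiness (c^[i + 1] n) := prod_image hinj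

lemma card_filter_Icc_odd_eq_card_oddSteps (n ν : ℕ) :
    #((Icc 1 ν).filter fun i => Odd (c^[i - 1] n)) = #(oddSteps n ν) := by
  have : (Icc 1 ν).filter (fun i => Odd (c^[i - 1] n)) =
      (oddSteps n ν).map (addRightEmbedding 1) := by
    ext i
    simp only [oddSteps, mem_filter, mem_Icc, mem_map, mem_range, addRightEmbedding_apply]
    constructor
    · rintro ⟨hi, hodd⟩
      exact ⟨i - 1, ⟨by omega, hodd⟩, by omega⟩
    · rintro ⟨j, ⟨hj, hodd⟩, rfl⟩
      exact ⟨by omega, hodd⟩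
  rw [this, card_map]

/-- for `n ∈ L ν` with `κ` the number of odd steps, `n ≥ σ(n) · 2^ν/6^κ`. -/
theorem stmt_15 (ν : ℕ) (n : ℕ) (hn : n ∈ L ν)
    (κ : ℕ) (hκ : κ = ((Finset.Icc 1 ν).filter fun i => Odd (c^[i - 1] n)).card) :
    σ n * 2 ^ ν / 6 ^ κ ≤ (n : ℝ) := by
  rw [hκ, card_filter_Icc_odd_eq_card_oddSteps]
  calc σ n * 2 ^ ν / 6 ^ #(oddSteps n ν)
      ≤ (∏ i ∈ oddSteps n ν, steadiness (c^[i + 1] n)) * 2 ^ ν / 6 ^ #(oddSteps n ν) := by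
        gcongr
        exact σ_le_prod_oddSteps hn
    _ = n := by
        rw [cast_eq_mul_iterate n ν, hn.2.1]
        ring
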